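/- For real constants m, x₀ > 0, a point [X:Y:Z:U] ∈ ℙ³(ℝ) satisfies the three equations Z² − U² + x₀·X·U = 0, X·U − m·Y·Z = 0, and X·Z + m·Y·(x₀·X − U) = 0 if and only if it lies in the image of the map ℙ¹(ℝ) → ℙ³(ℝ) induced by Γ̃(s,t) = (m·s·(t²−s²), t·(t²−s²), m·x₀·s²·t, m·x₀·s·t²). In other words, the real projective zero locus of these three quadrics is exactly the twisted cubic parametrized by Γ̃. -/

import Mathlib

/-!
Write `v = (X, Y, Z, U)`. On the zero locus the first two quadrics give
`Γ̃(Z, U) = m x₀ Z U • v`, so `[s : t] = [Z : U]` inverts the parametrization wherever `Z U ≠ 0`.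
If `Z U = 0`, the quadrics force `Z = U = 0` and `X Y = 0`, and then
`Γ̃(X, m Y) = m (m² Y² - X²) • v` with a nonzero factor.
-/

/-- The homogenized twisted cubic parametrization as a vector in `ℝ⁴`. -/
def gammaTilde (m x₀ s t : ℝ) : Fin 4 → ℝ :=
  ![m * s * (t ^ 2 - s ^ 2), t * (t ^ 2 - s ^ 2), m * x₀ * s ^ 2 * t, m * x₀ * s * t ^ 2]

def QuadricsVanish (m x₀ : ℝ) (v : Fin 4 → ℝ) : Prop :=
  v 2 ^ 2 - v 3 ^ 2 + x₀ * v 0 * v 3 = 0 ∧ v 0 * v 3 - m * v 1 * v 2 = 0 ∧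
    v 0 * v 2 + m * v 1 * (x₀ * v 0 - v 3) = 0

theorem quadricsVanish_smul_gammaTilde (m x₀ s t c : ℝ) :
    QuadricsVanish m x₀ (c • gammaTilde m x₀ s t) := by
  refine ⟨?_, ?_, ?_⟩ <;>
    simp only [gammaTilde, Fin.isValue, Matrix.cons_val, Matrix.cons_val_zero,
      Matrix.cons_val_one, Pi.smul_apply, smul_eq_mul] <;>
    ring

theorem gammaTilde_zero_zero (m x₀ : ℝ) : gammaTilde m x₀ 0 0 = 0 := by
  funext i
  fin_cases i <;> simp [gammaTilde]

theorem exists_eq_smul_gammaTilde_of_gammaTilde_eq_smul {m x₀ s t a : ℝ} {v : Fin 4 → ℝ}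
    (ha : a ≠ 0) (hv : v ≠ 0) (h : gammaTilde m x₀ s t = a • v) :
    ∃ s t c : ℝ, (s, t) ≠ (0, 0) ∧ c ≠ 0 ∧ v = c • gammaTilde m x₀ s t := by
  refine ⟨s, t, a⁻¹, ?_, inv_ne_zero ha, by rw [h, inv_smul_smul₀ ha]⟩
  rintro hst
  obtain ⟨rfl, rfl⟩ := Prod.ext_iff.mp hst
  rw [gammaTilde_zero_zero, eq_comm, smul_eq_zero] at h
  exact h.elim ha hv

namespace QuadricsVanish

variable {m x₀ : ℝ} {v : Fin 4 → ℝ}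

theorem gammaTilde_eq_smul (h : QuadricsVanish m x₀ v) :
    gammaTilde m x₀ (v 2) (v 3) = (m * x₀ * v 2 * v 3) • v := by
  obtain ⟨h₁, h₂, -⟩ := h
  funext i
  fin_cases i <;> simp only [gammaTilde, Fin.isValue, Fin.zero_eta, Fin.mk_one, Fin.reduceFinMk,
    Matrix.cons_val, Matrix.cons_val_zero, Matrix.cons_val_one, Pi.smul_apply, smul_eq_mul]
  · linear_combination -m * v 2 * h₁
  · linear_combination -v 3 * h₁ + x₀ * v 3 * h₂
  all_goals ring

theorem eq_zero_of_mul_eq_zero (h : QuadricsVanish m x₀ v) (hZU : v 2 * v 3 = 0) :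
    v 2 = 0 ∧ v 3 = 0 := by
  obtain ⟨h₁, h₂, -⟩ := h
  rcases mul_eq_zero.mp hZU with hZ | hU
  · have hU : v 3 ^ 2 = 0 := by
      linear_combination -h₁ + v 2 * hZ + x₀ * h₂ + m * x₀ * v 1 * hZ
    exact ⟨hZ, pow_eq_zero_iff two_ne_zero |>.mp hU⟩
  · have hZ : v 2 ^ 2 = 0 := by linear_combination h₁ + (v 3 - x₀ * v 0) * hU
    exact ⟨pow_eq_zero_iff two_ne_zero |>.mp hZ, hU⟩

theorem mul_eq_zero_of_eq_zero (h : QuadricsVanish m x₀ v) (hm : m ≠ 0) (hx₀ : x₀ ≠ 0)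
    (hZ : v 2 = 0) (hU : v 3 = 0) : v 0 * v 1 = 0 := by
  have h₃ : m * x₀ * (v 0 * v 1) = 0 := by linear_combination h.2.2 - v 0 * hZ + m * v 1 * hU
  simpa [hm, hx₀] using h₃

end QuadricsVanish

theorem gammaTilde_eq_smul_of_eq_zero {m x₀ : ℝ} {v : Fin 4 → ℝ}
    (hZ : v 2 = 0) (hU : v 3 = 0) (hXY : v 0 * v 1 = 0) :
    gammaTilde m x₀ (v 0) (m * v 1) = (m * (m ^ 2 * v 1 ^ 2 - v 0 ^ 2)) • v := by
  funext i
  fin_cases i <;> simp only [gammaTilde, Fin.isValue, Fin.zero_eta, Fin.mk_one, Fin.reduceFinMk,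
    Matrix.cons_val, Matrix.cons_val_zero, Matrix.cons_val_one, Pi.smul_apply, smul_eq_mul]
  · ring
  · ring
  · linear_combination m ^ 2 * x₀ * v 0 * hXY - m * (m ^ 2 * v 1 ^ 2 - v 0 ^ 2) * hZ
  · linear_combination m ^ 3 * x₀ * v 1 * hXY - m * (m ^ 2 * v 1 ^ 2 - v 0 ^ 2) * hU

theorem mul_sq_sub_sq_ne_zero {m X Y : ℝ} (hm : m ≠ 0) (hXY : X * Y = 0)
    (h : X ≠ 0 ∨ Y ≠ 0) :
    m * (m ^ 2 * Y ^ 2 - X ^ 2) ≠ 0 := by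
  refine mul_ne_zero hm ?_
  rcases mul_eq_zero.mp hXY with rfl | rfl
  · simpa [hm] using h
  · simpa using h

theorem twisted_cubic_is_zero_locus (m x₀ : ℝ) (hm : 0 < m) (hx₀ : 0 < x₀)
    (v : Fin 4 → ℝ) (hv : v ≠ 0) :
    ((v 2) ^ 2 - (v 3) ^ 2 + x₀ * v 0 * v 3 = 0 ∧
     v 0 * v 3 - m * v 1 * v 2 = 0 ∧
     v 0 * v 2 + m * v 1 * (x₀ * v 0 - v 3) = 0)
    ↔ ∃ s t c : ℝ, (s, t) ≠ (0, 0) ∧ c ≠ 0 ∧ v = c • gammaTilde m x₀ s t := by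
  constructor
  · intro (h : QuadricsVanish m x₀ v)
    by_cases hZU : v 2 * v 3 = 0
    · obtain ⟨hZ, hU⟩ := h.eq_zero_of_mul_eq_zero hZU
      have hXY := h.mul_eq_zero_of_eq_zero hm.ne' hx₀.ne' hZ hU
      have hXY₀ : v 0 ≠ 0 ∨ v 1 ≠ 0 := by
        by_contra! hXY₀
        exact hv (by funext i; fin_cases i <;> simp [hXY₀, hZ, hU])
      exact exists_eq_smul_gammaTilde_of_gammaTilde_eq_smul
        (mul_sq_sub_sq_ne_zero hm.ne' hXY hXY₀) hv (gammaTilde_eq_smul_of_eq_zero hZ hU hXY)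
    · refine exists_eq_smul_gammaTilde_of_gammaTilde_eq_smul ?_ hv h.gammaTilde_eq_smul
      rw [mul_assoc]
      exact mul_ne_zero (mul_ne_zero hm.ne' hx₀.ne') hZU
  · rintro ⟨s, t, c, -, -, rfl⟩
    exact quadricsVanish_smul_gammaTilde m x₀ s t c
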